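/- The set of satisfied indices S is finite and satisfies #S ≤ 10^4 · ∬_{{(s,t) ∈ [0,1]×[0,1] : |g(s)−g(t)| > δ}} ds dt / |s−t|². -/

import Mathlib

/-!
For a satisfied index `k` with witness interval `I = (a, b)`, every `s ∈ E_k ∩ I` and
`t ∈ N_kᶜ ∩ I` satisfy `|g s - g t| > δ` and `|s - t| < |I|`, so the rectangle
`(E_k ∩ I) × (N_kᶜ ∩ I)` carries at least `(0.01 |I|)² / |I|² = 10⁻⁴` of the integral.
The sets `E_k`, `k ∈ ℕ`, overlap only at points where `g ∈ δℕ`, a countable (hence null) set,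
so after removing it these rectangles are pairwise disjoint and their contributions add up.
-/

open MeasureTheory Set

/-- One-dimensional Lebesgue measure of a set, as a real number. -/
noncomputable def len (A : Set ℝ) : ℝ := (volume A).toReal

/-- The discretized level set `E_k = {s ∈ [0,1] | kδ ≤ g(s) ≤ (k+1)δ}`. -/
def lev (g : ℝ → ℝ) (δ : ℝ) (k : ℤ) : Set ℝ :=
  {s ∈ Icc (0:ℝ) 1 | (k : ℝ) * δ ≤ g s ∧ g s ≤ ((k : ℝ) + 1) * δ}

/-- The neighbors `N_k = E_{k-1} ∪ E_k ∪ E_{k+1}`. -/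
def nbr (g : ℝ → ℝ) (δ : ℝ) (k : ℤ) : Set ℝ :=
  lev g δ (k - 1) ∪ lev g δ k ∪ lev g δ (k + 1)

/-- The set of satisfied indices `𝒮`. -/
def sat (g : ℝ → ℝ) (δ : ℝ) : Set ℕ :=
  {k | ∃ a b : ℝ, 0 ≤ a ∧ a < b ∧ b ≤ 1 ∧
    len (lev g δ k ∩ Ioo a b) > 0.01 * (b - a) ∧
    len ((Icc (0:ℝ) 1 \ nbr g δ k) ∩ Ioo a b) > 0.01 * (b - a)}

open scoped ENNReal

def farPairs (g : ℝ → ℝ) (δ : ℝ) : Set (ℝ × ℝ) :=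
  {p | p.1 ∈ Icc (0:ℝ) 1 ∧ p.2 ∈ Icc (0:ℝ) 1 ∧ δ < |g p.1 - g p.2|}

def levelPoints (g : ℝ → ℝ) (δ : ℝ) : Set ℝ :=
  ⋃ j : ℕ, {s ∈ Icc (0:ℝ) 1 | g s = j * δ}

lemma nonempty_of_len_pos {A : Set ℝ} (h : 0 < len A) : A.Nonempty := by
  rw [nonempty_iff_ne_empty]
  rintro rfl
  simp [len] at h

lemma volume_mul_volume_le_setLIntegral_inv_sq {S T : Set ℝ} {a b : ℝ}
    (hS : S ⊆ Ioo a b) (hT : T ⊆ Ioo a b) (hST : Disjoint S T) :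
    volume S * volume T * ENNReal.ofReal (1 / (b - a) ^ 2) ≤
      ∫⁻ p in S ×ˢ T, ENNReal.ofReal (1 / |p.1 - p.2| ^ 2) := by
  have hbound : ∀ p ∈ S ×ˢ T,
      ENNReal.ofReal (1 / (b - a) ^ 2) ≤ ENNReal.ofReal (1 / |p.1 - p.2| ^ 2) := by
    rintro ⟨s, t⟩ ⟨hs, ht⟩
    have hpos : 0 < |s - t| := abs_pos.mpr (sub_ne_zero.mpr (hST.ne_of_mem hs ht))
    have hlt : |s - t| < b - a := by
      rw [abs_sub_lt_iff]
      constructor <;> linarith [(hS hs).1, (hS hs).2, (hT ht).1, (hT ht).2]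
    gcongr
  calc volume S * volume T * ENNReal.ofReal (1 / (b - a) ^ 2)
      = ∫⁻ _ in S ×ˢ T, ENNReal.ofReal (1 / (b - a) ^ 2) := by
        rw [setLIntegral_const, Measure.volume_eq_prod, Measure.prod_prod, mul_comm]
    _ ≤ ∫⁻ p in S ×ˢ T, ENNReal.ofReal (1 / |p.1 - p.2| ^ 2) :=
        setLIntegral_mono (by fun_prop) hbound

section

variable {g : ℝ → ℝ} {δ : ℝ}

lemma measurableSet_lev (hg : ContinuousOn g (Icc (0:ℝ) 1)) (k : ℤ) :
    MeasurableSet (lev g δ k) := by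
  have h : lev g δ k = Icc (0:ℝ) 1 ∩ g ⁻¹' Icc ((k:ℝ) * δ) (((k:ℝ) + 1) * δ) := by
    ext s; simp [lev]
  rw [h]
  exact (hg.preimage_isClosed_of_isClosed isClosed_Icc isClosed_Icc).measurableSet

lemma measurableSet_nbr (hg : ContinuousOn g (Icc (0:ℝ) 1)) (k : ℤ) :
    MeasurableSet (nbr g δ k) :=
  ((measurableSet_lev hg _).union (measurableSet_lev hg _)).union (measurableSet_lev hg _)

lemma sat_finite (hδ : 0 < δ) (hg : ContinuousOn g (Icc (0:ℝ) 1)) : (sat g δ).Finite := by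
  obtain ⟨C, hC⟩ := isCompact_Icc.bddAbove_image hg
  refine (finite_Iic ⌈C / δ⌉₊).subset ?_
  rintro k ⟨a, b, -, hab, -, hlen, -⟩
  have hpos : 0 < len (lev g δ k ∩ Ioo a b) := by linarith
  obtain ⟨s, ⟨hs01, hks, -⟩, -⟩ := nonempty_of_len_pos hpos
  have hgs : g s ≤ C := hC (mem_image_of_mem g hs01)
  have hk : (k:ℝ) ≤ C / δ := by
    rw [le_div_iff₀ hδ]
    push_cast at hks
    linarith
  exact Nat.cast_le.mp (hk.trans (Nat.le_ceil _))

lemma mem_nbr_of_mem_Icc {k : ℤ} {t : ℝ} (ht : t ∈ Icc (0:ℝ) 1)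
    (hlo : ((k:ℝ) - 1) * δ ≤ g t) (hhi : g t ≤ ((k:ℝ) + 2) * δ) : t ∈ nbr g δ k := by
  rcases le_or_gt (g t) (k * δ) with h | h
  · exact Or.inl (Or.inl ⟨ht, by push_cast; linarith, by push_cast; linarith⟩)
  rcases le_or_gt (g t) ((k + 1) * δ) with h' | h'
  · exact Or.inl (Or.inr ⟨ht, h.le, h'⟩)
  · exact Or.inr ⟨ht, by push_cast; linarith, by push_cast; linarith⟩

lemma lev_prod_compl_nbr_subset_farPairs (k : ℤ) :
    lev g δ k ×ˢ (Icc (0:ℝ) 1 \ nbr g δ k) ⊆ farPairs g δ := by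
  rintro ⟨s, t⟩ ⟨⟨hs01, hks, hsk⟩, ht01, htN⟩
  refine ⟨hs01, ht01, ?_⟩
  rcases lt_or_ge (g t) ((k - 1) * δ) with hlo | hlo
  · exact (by linarith : δ < g s - g t).trans_le (le_abs_self _)
  rcases lt_or_ge ((k + 2) * δ) (g t) with hhi | hhi
  · exact (by push_cast at hsk; linarith : δ < -(g s - g t)).trans_le (neg_le_abs _)
  · exact absurd (mem_nbr_of_mem_Icc ht01 hlo hhi) htN

lemma lev_inter_lev_subset_levelPoints (hδ : 0 < δ) {j j' : ℕ} (hjj' : j < j') :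
    lev g δ j ∩ lev g δ j' ⊆ levelPoints g δ := by
  rintro s ⟨⟨hs01, -, hsj⟩, -, hj's, -⟩
  have hcast : (j:ℝ) + 1 ≤ j' := by exact_mod_cast hjj'
  push_cast at hsj hj's
  refine mem_iUnion.mpr ⟨j', hs01, le_antisymm ?_ hj's⟩
  nlinarith

lemma disjoint_lev_diff_levelPoints (hδ : 0 < δ) {j j' : ℕ} (hne : j ≠ j') :
    Disjoint (lev g δ j \ levelPoints g δ) (lev g δ j' \ levelPoints g δ) := by
  wlog hjj' : j < j' generalizing j j'
  · exact (this hne.symm (hne.lt_or_gt.resolve_left hjj')).symm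
  rw [disjoint_left]
  rintro s ⟨hsj, hsB⟩ ⟨hsj', -⟩
  exact hsB (lev_inter_lev_subset_levelPoints hδ hjj' ⟨hsj, hsj'⟩)

lemma levelPoints_countable (hlev : ∀ k : ℕ, {s ∈ Icc (0:ℝ) 1 | g s = (k : ℝ) * δ}.Finite) :
    (levelPoints g δ).Countable :=
  countable_iUnion fun j => (hlev j).countable

lemma exists_rect_of_mem_sat (hg : ContinuousOn g (Icc (0:ℝ) 1))
    (hlev : ∀ k : ℕ, {s ∈ Icc (0:ℝ) 1 | g s = (k : ℝ) * δ}.Finite) {k : ℕ} (hk : k ∈ sat g δ) :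
    ∃ S T : Set ℝ, MeasurableSet S ∧ MeasurableSet T ∧
      S ⊆ lev g δ k \ levelPoints g δ ∧ T ⊆ Icc (0:ℝ) 1 \ nbr g δ k ∧
      ENNReal.ofReal (1 / 10 ^ 4) ≤ ∫⁻ p in S ×ˢ T, ENNReal.ofReal (1 / |p.1 - p.2| ^ 2) := by
  obtain ⟨a, b, -, hab, -, hlenS, hlenT⟩ := hk
  have hB := levelPoints_countable hlev
  set S := (lev g δ k ∩ Ioo a b) \ levelPoints g δ
  set T := (Icc (0:ℝ) 1 \ nbr g δ k) ∩ Ioo a b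
  have hST : Disjoint S T := by
    rw [disjoint_left]
    rintro s ⟨⟨hs, -⟩, -⟩ ⟨⟨-, hsN⟩, -⟩
    exact hsN (Or.inl (Or.inr hs))
  have hvolS : ENNReal.ofReal (0.01 * (b - a)) ≤ volume S := by
    rw [measure_sdiff_null (hB.measure_zero _)]
    exact ENNReal.ofReal_le_of_le_toReal hlenS.le
  have hvolT : ENNReal.ofReal (0.01 * (b - a)) ≤ volume T :=
    ENNReal.ofReal_le_of_le_toReal hlenT.le
  refine ⟨S, T, ((measurableSet_lev hg _).inter measurableSet_Ioo).diff hB.measurableSet,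
    (measurableSet_Icc.diff (measurableSet_nbr hg _)).inter measurableSet_Ioo,
    sdiff_subset_sdiff inter_subset_left subset_rfl, inter_subset_left, ?_⟩
  calc ENNReal.ofReal (1 / 10 ^ 4)
      = ENNReal.ofReal (0.01 * (b - a)) * ENNReal.ofReal (0.01 * (b - a)) *
          ENNReal.ofReal (1 / (b - a) ^ 2) := by
        rw [← ENNReal.ofReal_mul (by linarith), ← ENNReal.ofReal_mul (by positivity)]
        congr 1
        field_simp [(sub_pos.mpr hab).ne']
        norm_num
    _ ≤ volume S * volume T * ENNReal.ofReal (1 / (b - a) ^ 2) := by gcongr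
    _ ≤ _ := volume_mul_volume_le_setLIntegral_inv_sq (sdiff_subset.trans inter_subset_right)
        inter_subset_right hST

end

theorem stmt9_general (δ : ℝ) (hδ : 0 < δ) (g : ℝ → ℝ)
    (hg : ContinuousOn g (Icc (0:ℝ) 1))
    (hlev : ∀ k : ℕ, {s ∈ Icc (0:ℝ) 1 | g s = (k : ℝ) * δ}.Finite) :
    (sat g δ).Finite ∧
    ((sat g δ).ncard : ENNReal) ≤ 10 ^ 4 *
      ∫⁻ p in {p : ℝ × ℝ | p.1 ∈ Icc (0:ℝ) 1 ∧ p.2 ∈ Icc (0:ℝ) 1 ∧ δ < |g p.1 - g p.2|},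
        ENNReal.ofReal (1 / |p.1 - p.2| ^ 2) := by
  have hfin := sat_finite hδ hg
  refine ⟨hfin, ?_⟩
  set F := hfin.toFinset
  choose! S T hSm hTm hSlev hTnbr hint using
    fun k (hk : k ∈ F) => exists_rect_of_mem_sat hg hlev (hfin.mem_toFinset.mp hk)
  have hdisj : (F : Set ℕ).PairwiseDisjoint fun k => S k ×ˢ T k := fun j hj j' hj' hne =>
    disjoint_prod.mpr <| Or.inl <|
      (disjoint_lev_diff_levelPoints hδ hne).mono (hSlev j hj) (hSlev j' hj')
  have hsub : (⋃ k ∈ F, S k ×ˢ T k) ⊆ farPairs g δ := iUnion₂_subset fun k hk =>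
    (prod_mono ((hSlev k hk).trans sdiff_subset) (hTnbr k hk)).trans
      (lev_prod_compl_nbr_subset_farPairs k)
  have hunit : (10 : ℝ≥0∞) ^ 4 * ENNReal.ofReal (1 / 10 ^ 4) = 1 := by
    rw [ENNReal.ofReal_div_of_pos (by norm_num)]
    norm_num
    exact ENNReal.mul_inv_cancel (by norm_num) (by norm_num)
  calc ((sat g δ).ncard : ℝ≥0∞)
      = ∑ _k ∈ F, 10 ^ 4 * ENNReal.ofReal (1 / 10 ^ 4) := by
        rw [hunit, Finset.sum_const, nsmul_eq_mul, mul_one, ncard_eq_toFinset_card _ hfin]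
    _ ≤ ∑ k ∈ F, 10 ^ 4 * ∫⁻ p in S k ×ˢ T k, ENNReal.ofReal (1 / |p.1 - p.2| ^ 2) := by
        gcongr with k hk
        exact hint k hk
    _ = 10 ^ 4 * ∫⁻ p in ⋃ k ∈ F, S k ×ˢ T k, ENNReal.ofReal (1 / |p.1 - p.2| ^ 2) := by
        rw [← Finset.mul_sum,
          lintegral_biUnion_finset hdisj fun k hk => (hSm k hk).prod (hTm k hk)]
    _ ≤ 10 ^ 4 * ∫⁻ p in farPairs g δ, ENNReal.ofReal (1 / |p.1 - p.2| ^ 2) := by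
        gcongr

/-- Inequality (7): the set of satisfied indices `𝒮` is finite and
`#𝒮 ≤ 10⁴ ∬_{s,t ∈ [0,1], |g(s)-g(t)| > δ} ds dt / |s-t|²`. -/
theorem stmt9 (δ : ℝ) (hδ : 0 < δ) (M : ℕ) (hM : 100 < M) (g : ℝ → ℝ)
    (hg : ContinuousOn g (Icc (0:ℝ) 1)) (hg0 : g 0 = 0) (hg1 : g 1 = (M : ℝ) * δ)
    (hlev : ∀ k : ℕ, {s ∈ Icc (0:ℝ) 1 | g s = (k : ℝ) * δ}.Finite) :
    (sat g δ).Finite ∧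
    ((sat g δ).ncard : ENNReal) ≤ 10 ^ 4 *
      ∫⁻ p in {p : ℝ × ℝ | p.1 ∈ Icc (0:ℝ) 1 ∧ p.2 ∈ Icc (0:ℝ) 1 ∧ δ < |g p.1 - g p.2|},
        ENNReal.ofReal (1 / |p.1 - p.2| ^ 2) :=
  stmt9_general δ hδ g hg hlev
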